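/- Let λ, μ be closed Lagrangian subspaces forming a Fredholm pair. Then the kernel of q_λ(μ) = Id − τ_μ∘τ_λ equals (λ∩μ) + J(λ∩μ), which is complex-linearly isomorphic to the complexification (λ∩μ) ⊗ ℂ. -/

import Mathlib

open Module RealInnerProductSpace

variable {H : Type*} [NormedAddCommGroup H] [InnerProductSpace ℝ H] [CompleteSpace H]

/-- A closed Lagrangian subspace of the real symplectic Hilbert space `H` with symplectic
form `ω(x,y) = ⟪J x, y⟫`: a closed subspace which equals its own `ω`-annihilator. -/
def IsLagrangian (J : H →L[ℝ] H) (lam : Submodule ℝ H) : Prop :=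
  IsClosed (lam : Set H) ∧ ∀ x : H, x ∈ lam ↔ ∀ y ∈ lam, ⟪J x, y⟫ = 0

/-- The pair `(lam, mu)` is a Fredholm pair of subspaces. -/
def IsFredholmPair (lam mu : Submodule ℝ H) : Prop :=
  FiniteDimensional ℝ ↥(lam ⊓ mu) ∧ IsClosed ((lam ⊔ mu : Submodule ℝ H) : Set H) ∧
    FiniteDimensional ℝ (H ⧸ (lam ⊔ mu))

/-- A bounded real-linear operator is Fredholm. -/
def IsFredholmR (T : H →L[ℝ] H) : Prop :=
  FiniteDimensional ℝ (LinearMap.ker (T : H →ₗ[ℝ] H)) ∧ IsClosed (LinearMap.range (T : H →ₗ[ℝ] H) : Set H) ∧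
    FiniteDimensional ℝ (H ⧸ LinearMap.range (T : H →ₗ[ℝ] H))

/-- The orthogonal projection onto a closed subspace, as an operator `H → H`. -/
noncomputable def projCLM (lam : Submodule ℝ H) [CompleteSpace lam] : H →L[ℝ] H :=
  lam.subtypeL.comp (lam.orthogonalProjectionOnto)

/-- The conjugation `τ_λ = 2P(λ) − Id` determined by the real structure `λ`. -/
noncomputable def conjOf (lam : Submodule ℝ H) [CompleteSpace lam] : H →L[ℝ] H :=
  (2 : ℝ) • projCLM lam - 1

/-! `τ_μ τ_λ x = x` means `τ_λ x = τ_μ x`, i.e. `P_λ x = P_μ x`; splitting `x = P x + (x - P x)`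
shows that for any two closed subspaces the kernel of `1 - τ_μ τ_λ` is `(λ ⊓ μ) ⊔ (λᗮ ⊓ μᗮ)`.
For Lagrangians `J λ = λᗮ`, so the second summand is `J (λ ⊓ μ)`, which meets `λ ⊓ μ ⊆ λ` only
in `0`. Hence `(a, b) ↦ a + J b` is an isomorphism, and it turns `(a, b) ↦ (-b, a)` into `J`
because `J² = -1`. -/

lemma Submodule.exists_prodEquiv_sup_map {R M : Type*} [Ring R] [AddCommGroup M] [Module R M]
    (L K : Submodule R M) (g : M →ₗ[R] M) (hg : Function.Injective g)
    (hdisj : Disjoint L (L.map g)) (hK : L ⊔ L.map g = K) :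
    ∃ e : (L × L) ≃ₗ[R] K, ∀ p, (e p : M) = p.1 + g p.2 := by
  let f := L.subtype.coprod (g ∘ₗ L.subtype)
  have hrange : LinearMap.range f = K := by
    rw [LinearMap.range_coprod, LinearMap.range_comp, Submodule.range_subtype, hK]
  have hinj : Function.Injective f := by
    rw [← LinearMap.ker_eq_bot, LinearMap.ker_coprod_of_disjoint_range]
    · simp [LinearMap.ker_comp, LinearMap.ker_eq_bot.mpr hg]
    · rwa [LinearMap.range_comp, Submodule.range_subtype]
  exact ⟨(LinearEquiv.ofInjective f hinj).trans (LinearEquiv.ofEq _ _ hrange), fun _ => rfl⟩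

section

variable {E : Type*} [NormedAddCommGroup E] [InnerProductSpace ℝ E] {J : E →L[ℝ] E}

lemma projCLM_eq_starProjection (nu : Submodule ℝ E) [CompleteSpace nu] :
    projCLM nu = nu.starProjection :=
  rfl

lemma conjOf_apply (nu : Submodule ℝ E) [CompleteSpace nu] (x : E) :
    conjOf nu x = nu.reflection x := by
  simp [conjOf, projCLM_eq_starProjection, Submodule.reflection_apply, two_smul]

lemma mem_ker_one_sub_conjOf_comp_iff (lam mu : Submodule ℝ E) [CompleteSpace lam]
    [CompleteSpace mu] (x : E) :
    x ∈ LinearMap.ker ((1 - conjOf mu ∘L conjOf lam : E →L[ℝ] E) : E →ₗ[ℝ] E) ↔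
      lam.starProjection x = mu.starProjection x := by
  calc _ ↔ mu.reflection (lam.reflection x) = x := by
        simp [conjOf_apply, sub_eq_zero, eq_comm (a := x)]
    _ ↔ lam.reflection x = mu.reflection x := by
        rw [← mu.reflection_involutive.injective.eq_iff, Submodule.reflection_reflection]
    _ ↔ _ := by
        rw [Submodule.reflection_apply, Submodule.reflection_apply, sub_left_inj,
          ← Nat.cast_smul_eq_nsmul ℝ, ← Nat.cast_smul_eq_nsmul ℝ]
        exact (smul_right_injective E (by norm_num)).eq_iff

lemma ker_one_sub_conjOf_comp (lam mu : Submodule ℝ E) [CompleteSpace lam] [CompleteSpace mu] :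
    LinearMap.ker ((1 - conjOf mu ∘L conjOf lam : E →L[ℝ] E) : E →ₗ[ℝ] E) =
      (lam ⊓ mu) ⊔ (lamᗮ ⊓ muᗮ) := by
  apply le_antisymm
  · intro x hx
    rw [mem_ker_one_sub_conjOf_comp_iff] at hx
    have hP : lam.starProjection x ∈ lam ⊓ mu :=
      ⟨lam.starProjection_apply_mem x, hx ▸ mu.starProjection_apply_mem x⟩
    have hQ : x - lam.starProjection x ∈ lamᗮ ⊓ muᗮ :=
      ⟨lam.sub_starProjection_mem_orthogonal x, hx ▸ mu.sub_starProjection_mem_orthogonal x⟩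
    simpa using Submodule.add_mem_sup hP hQ
  · refine sup_le (fun x hx => ?_) (fun x hx => ?_) <;> rw [mem_ker_one_sub_conjOf_comp_iff]
    · rw [Submodule.starProjection_eq_self_iff.mpr hx.1,
        Submodule.starProjection_eq_self_iff.mpr hx.2]
    · rw [(lam.starProjection_apply_eq_zero_iff).mpr hx.1,
        (mu.starProjection_apply_eq_zero_iff).mpr hx.2]

lemma apply_apply_of_comp_self_eq_neg_one (hJ2 : J ∘L J = -1) (x : E) : J (J x) = -x := by
  simpa using congr($hJ2 x)

lemma injective_of_comp_self_eq_neg_one (hJ2 : J ∘L J = -1) : Function.Injective J :=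
  fun x y h => by simpa [apply_apply_of_comp_self_eq_neg_one hJ2] using congr(J $h)

lemma IsLagrangian.map_eq_orthogonal (hJ2 : J ∘L J = -1) {nu : Submodule ℝ E}
    (hnu : IsLagrangian J nu) : nu.map (J : E →ₗ[ℝ] E) = nuᗮ := by
  ext z
  constructor
  · rintro ⟨x, hx, rfl⟩
    exact (Submodule.mem_orthogonal' _ _).2 ((hnu.2 x).1 hx)
  · intro hz
    refine ⟨-J z, (hnu.2 _).2 fun y hy => ?_, by simp [apply_apply_of_comp_self_eq_neg_one hJ2]⟩
    rw [map_neg, apply_apply_of_comp_self_eq_neg_one hJ2, neg_neg]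
    exact (Submodule.mem_orthogonal' _ _).1 hz y hy

lemma IsLagrangian.map_inf_eq_orthogonal_inf (hJ2 : J ∘L J = -1) {lam mu : Submodule ℝ E}
    (hlam : IsLagrangian J lam) (hmu : IsLagrangian J mu) :
    (lam ⊓ mu).map (J : E →ₗ[ℝ] E) = lamᗮ ⊓ muᗮ := by
  rw [Submodule.map_inf _ (injective_of_comp_self_eq_neg_one hJ2), hlam.map_eq_orthogonal hJ2,
    hmu.map_eq_orthogonal hJ2]

end

theorem ker_q_eq_complexification_general
    (J : H →L[ℝ] H) (hJ2 : J ∘L J = -1)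
    (lam mu : Submodule ℝ H) (hlam : IsLagrangian J lam) (hmu : IsLagrangian J mu)
    [CompleteSpace lam] [CompleteSpace mu] :
    LinearMap.ker ((1 - conjOf mu ∘L conjOf lam : H →L[ℝ] H) : H →ₗ[ℝ] H) =
        (lam ⊓ mu) ⊔ (lam ⊓ mu).map (J : H →ₗ[ℝ] H) ∧
      ∃ e : (↥(lam ⊓ mu) × ↥(lam ⊓ mu)) ≃ₗ[ℝ]
          ↥(LinearMap.ker ((1 - conjOf mu ∘L conjOf lam : H →L[ℝ] H) : H →ₗ[ℝ] H)),
        (∀ p, (e p : H) = (p.1 : H) + J p.2) ∧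
        (∀ p, (e (-p.2, p.1) : H) = J (e p)) := by
  have hJmap := hlam.map_inf_eq_orthogonal_inf hJ2 hmu
  have hker : LinearMap.ker ((1 - conjOf mu ∘L conjOf lam : H →L[ℝ] H) : H →ₗ[ℝ] H) =
      (lam ⊓ mu) ⊔ (lam ⊓ mu).map (J : H →ₗ[ℝ] H) := by
    rw [ker_one_sub_conjOf_comp, hJmap]
  have hdisj : Disjoint (lam ⊓ mu) ((lam ⊓ mu).map (J : H →ₗ[ℝ] H)) := by
    rw [hJmap]
    exact lam.orthogonal_disjoint.mono inf_le_left inf_le_left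
  obtain ⟨e, he⟩ := Submodule.exists_prodEquiv_sup_map _ _ _
    (injective_of_comp_self_eq_neg_one hJ2) hdisj hker.symm
  refine ⟨hker, e, he, fun p => ?_⟩
  rw [he, he]
  simp [apply_apply_of_comp_self_eq_neg_one hJ2, add_comm]

/-- For closed Lagrangian subspaces `λ, μ` forming a Fredholm pair, the kernel of
`q_λ(μ) = Id − τ_μ∘τ_λ` equals `(λ∩μ) + J(λ∩μ)`, which is complex-linearly isomorphic to the
complexification `(λ∩μ) ⊗ ℂ` (identified with `(λ∩μ) × (λ∩μ)`, multiplication by `√−1`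
being `(x,y) ↦ (−y,x)` there and `J` on `H_J`). -/
theorem ker_q_eq_complexification
    (J : H →L[ℝ] H) (hJ2 : J ∘L J = -1)
    (hJorth : ∀ x y : H, ⟪J x, J y⟫ = ⟪x, y⟫)
    (lam mu : Submodule ℝ H) (hlam : IsLagrangian J lam) (hmu : IsLagrangian J mu)
    [CompleteSpace lam] [CompleteSpace mu]
    (hpair : IsFredholmPair lam mu) :
    LinearMap.ker ((1 - conjOf mu ∘L conjOf lam : H →L[ℝ] H) : H →ₗ[ℝ] H) =
        (lam ⊓ mu) ⊔ (lam ⊓ mu).map (J : H →ₗ[ℝ] H) ∧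
      ∃ e : (↥(lam ⊓ mu) × ↥(lam ⊓ mu)) ≃ₗ[ℝ]
          ↥(LinearMap.ker ((1 - conjOf mu ∘L conjOf lam : H →L[ℝ] H) : H →ₗ[ℝ] H)),
        (∀ p, (e p : H) = (p.1 : H) + J p.2) ∧
        (∀ p, (e (-p.2, p.1) : H) = J (e p)) :=
  ker_q_eq_complexification_general J hJ2 lam mu hlam hmu
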